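/- For p ∈ ℤ, let D_p ∈ End(ℂ((t))) be D_p(g) = −t^{p+1}·g'. For integers p, q and m ≥ 0, set ψ_m(p,q) := (coefficient of t^m in D_p(π₋(D_q(t^m)))) − (coefficient of t^m in D_q(π₋(D_p(t^m)))), where π₋ : ℂ((t)) → H₋ is the principal-part projection. Then the function m ↦ ψ_m(p,q) is finitely supported, and its sum equals −(p³−p)/6 if q = −p, and 0 if p + q ≠ 0. In other words, the canonical two-cocycle ψ of gl(H) restricts on the Witt algebra generators L_p = −t^{p+1}∂_t to ψ(L_p, L_q) = −(1/6)(p³−p)·δ_{p+q,0}, so that the cocycle −(1/2)ψ restricts on the Witt algebra to the Virasoro cocycle (1/12)(p³−p)·δ_{p+q,0}. -/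

import Mathlib

open HahnSeries

/-- Formal derivative on Laurent series: `(D f).coeff n = (n+1) * f.coeff (n+1)`. -/
noncomputable def D (f : LaurentSeries ℂ) : LaurentSeries ℂ where
  coeff := fun n => ((n + 1 : ℤ) : ℂ) * f.coeff (n + 1)
  isPWO_support' := by
    have himg : (Function.support fun n : ℤ => ((n + 1 : ℤ) : ℂ) * f.coeff (n + 1)) ⊆
        (fun n : ℤ => n - 1) '' f.support := by
      intro n hn
      have h : f.coeff (n + 1) ≠ 0 := by
        intro h
        simp [Function.mem_support, h] at hn
      exact ⟨n + 1, h, by ring⟩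
    exact (f.isPWO_support.image_of_monotone
      (fun a b hab => by simpa using sub_le_sub_right hab 1)).mono himg

/-- The residue pairing `⟨f,g⟩ = -Res_{t=0}(f·g')`, i.e. minus the coefficient of
`t⁻¹` in `f * D g`. -/
noncomputable def resPair (f g : LaurentSeries ℂ) : ℂ := -((f * D g).coeff (-1))
/-- Truncation to strictly negative degrees (the principal part). -/
noncomputable def truncNeg (f : LaurentSeries ℂ) : LaurentSeries ℂ where
  coeff := fun n => if n < 0 then f.coeff n else 0
  isPWO_support' := f.isPWO_support.mono (fun n hn => by
    simp only [Function.mem_support] at hn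
    by_cases h : n < 0
    · simp only [h, if_true] at hn
      exact hn
    · simp [h] at hn)

/-- Truncation to strictly positive degrees. -/
noncomputable def truncPos (f : LaurentSeries ℂ) : LaurentSeries ℂ where
  coeff := fun n => if 0 < n then f.coeff n else 0
  isPWO_support' := f.isPWO_support.mono (fun n hn => by
    simp only [Function.mem_support] at hn
    by_cases h : 0 < n
    · simp only [h, if_true] at hn
      exact hn
    · simp [h] at hn)

lemma truncNeg_coeff (f : LaurentSeries ℂ) (n : ℤ) :
    (truncNeg f).coeff n = if n < 0 then f.coeff n else 0 := rfl

/-- The Witt generator `D_p = L_p = -t^{p+1}∂_t` acting on `ℂ((t))`. -/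
noncomputable def Dp (p : ℤ) (g : LaurentSeries ℂ) : LaurentSeries ℂ :=
  -(HahnSeries.single (p + 1) (1 : ℂ) * D g)

/-- The diagonal matrix coefficient at `t^m` of `D_p ∘ π₋ ∘ D_q − D_q ∘ π₋ ∘ D_p`. -/
noncomputable def psiWitt (p q : ℤ) (m : ℕ) : ℂ :=
  (Dp p (truncNeg (Dp q (HahnSeries.single (m : ℤ) (1 : ℂ))))).coeff (m : ℤ) -
    (Dp q (truncNeg (Dp p (HahnSeries.single (m : ℤ) (1 : ℂ))))).coeff (m : ℤ)

/-
Each `D_p` maps the monomial `t^k` to `-k t^{p+k}`, so `D_p π₋ D_q` sends `t^m` to a multiple of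
`t^{p+q+m}`, which has a diagonal coefficient only when `p + q = 0`.  For `q = -p = -n` with
`n ≥ 0`, only the monomials `t^m` with `m < n` are pushed into `H₋` by `D_{-n}`, each contributing
`(m - n) m`, and `∑_{m<n} (m - n) m = -(n³ - n)/6`.  The case `p < 0` follows by antisymmetry.
-/

lemma D_single (k : ℤ) (c : ℂ) : D (single k c) = single (k - 1) ((k : ℂ) * c) := by
  ext n
  by_cases h : n = k - 1
  · simp [D, h]
  · simp [D, h, show n + 1 ≠ k by omega]

lemma Dp_single (p k : ℤ) (c : ℂ) : Dp p (single k c) = single (p + k) (-((k : ℂ) * c)) := by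
  rw [Dp, D_single, single_mul_single, one_mul, ← single_neg, add_add_sub_cancel]

lemma truncNeg_single (k : ℤ) (c : ℂ) :
    truncNeg (single k c) = single k (if k < 0 then c else 0) := by
  ext n
  rw [truncNeg_coeff]
  by_cases h : n = k <;> simp [h]

lemma Dp_truncNeg_Dp_single (a b k : ℤ) (c : ℂ) :
    Dp a (truncNeg (Dp b (single k c))) =
      single (a + b + k) (if b + k < 0 then ((b + k : ℤ) : ℂ) * k * c else 0) := by
  rw [Dp_single, truncNeg_single, Dp_single, add_assoc]
  split_ifs <;> simp only [mul_neg, neg_neg, mul_zero, neg_zero, mul_assoc]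

lemma psiWitt_swap (p q : ℤ) (m : ℕ) : psiWitt q p m = -psiWitt p q m :=
  (neg_sub _ _).symm

lemma psiWitt_of_add_ne_zero {p q : ℤ} (h : p + q ≠ 0) (m : ℕ) : psiWitt p q m = 0 := by
  rw [psiWitt, Dp_truncNeg_Dp_single, Dp_truncNeg_Dp_single,
    coeff_single_of_ne (by omega), coeff_single_of_ne (by omega), sub_zero]

lemma psiWitt_natCast_neg (n m : ℕ) :
    psiWitt n (-n) m = if m < n then ((m : ℂ) - n) * m else 0 := by
  rw [psiWitt, Dp_truncNeg_Dp_single, Dp_truncNeg_Dp_single,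
    show (n : ℤ) + -n + m = m by ring, show -(n : ℤ) + n + m = m by ring,
    coeff_single_same, coeff_single_same, if_neg (by omega : ¬ (n : ℤ) + m < 0), sub_zero]
  by_cases h : m < n
  · rw [if_pos (by omega), if_pos h]
    push_cast
    ring
  · rw [if_neg (by omega), if_neg h]

lemma psiWitt_eq_zero_of_natAbs_le (p q : ℤ) {m : ℕ} (h : p.natAbs ≤ m) : psiWitt p q m = 0 := by
  by_cases hpq : p + q = 0
  · obtain rfl : q = -p := by omega
    obtain ⟨n, rfl | rfl⟩ := Int.eq_nat_or_neg p
    · rw [psiWitt_natCast_neg, if_neg (by simpa using h)]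
    · rw [neg_neg, psiWitt_swap, psiWitt_natCast_neg, if_neg (by simpa using h), neg_zero]
  · exact psiWitt_of_add_ne_zero hpq m

lemma support_psiWitt_subset (p q : ℤ) :
    Function.support (psiWitt p q) ⊆ Finset.range p.natAbs := fun m hm => by
  by_contra h
  exact hm (psiWitt_eq_zero_of_natAbs_le p q (by simpa using h))

lemma sum_range_sub_mul {K : Type*} [Field K] [CharZero K] (n : ℕ) (x : K) :
    ∑ m ∈ Finset.range n, ((m : K) - x) * m =
      n * (n - 1) * (2 * n - 1) / 6 - x * n * (n - 1) / 2 := by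
  induction n with
  | zero => simp
  | succ n ih =>
    rw [Finset.sum_range_succ, ih]
    push_cast
    ring

lemma sum_range_psiWitt_natCast_neg (n : ℕ) :
    ∑ m ∈ Finset.range n, psiWitt n (-n) m = -(((n : ℂ) ^ 3 - n) / 6) := by
  rw [Finset.sum_congr rfl fun m hm => by
      rw [psiWitt_natCast_neg, if_pos (Finset.mem_range.mp hm)],
    sum_range_sub_mul]
  ring

lemma sum_range_psiWitt_neg (p : ℤ) :
    ∑ m ∈ Finset.range p.natAbs, psiWitt p (-p) m = -(((p : ℂ) ^ 3 - p) / 6) := by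
  obtain ⟨n, rfl | rfl⟩ := Int.eq_nat_or_neg p
  · simpa using sum_range_psiWitt_natCast_neg n
  · rw [Int.natAbs_neg, Int.natAbs_natCast, neg_neg]
    simp only [psiWitt_swap (n : ℤ) (-n), Finset.sum_neg_distrib, sum_range_psiWitt_natCast_neg]
    push_cast
    ring

/-- the diagonal coefficients computing the canonical two-cocycle
`ψ(L_p, L_q) = Tr(π₊L_pπ₋L_qπ₊ − π₊L_qπ₋L_pπ₊)` on the Witt generators are finitely
supported over the monomial basis `{t^m : m ≥ 0}` of `H₊`, and their sum equals
`−(p³−p)/6` if `q = −p` and `0` if `p + q ≠ 0`; i.e. `ψ` restricts on the Witt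
algebra to `−2·`(Virasoro cocycle). -/
theorem psi_on_Witt_generators (p q : ℤ) :
    (Function.support fun m : ℕ => psiWitt p q m).Finite ∧
    ∑ᶠ m : ℕ, psiWitt p q m =
      if q = -p then -(((p : ℂ) ^ 3 - (p : ℂ)) / 6) else 0 := by
  have hsupp := support_psiWitt_subset p q
  refine ⟨(Finset.range p.natAbs).finite_toSet.subset hsupp, ?_⟩
  rw [finsum_eq_sum_of_support_subset _ hsupp]
  split_ifs with hq
  · subst hq
    exact sum_range_psiWitt_neg p
  · exact Finset.sum_eq_zero fun m _ => psiWitt_of_add_ne_zero (by omega) m
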